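/- Let d ≥ 2, T the d-adic rooted tree, σ ∈ Sym(d) a d-cycle generating S_0 := ⟨σ⟩, and let H := G_S = ∏_{n≥0} S_n with S_1 := D_d(S_0) and S_n := S_{n−1} × ⋯ × S_{n−1} (d copies) for n ≥ 2. For ρ ∈ Sym(d) put τ^ρ := (σ^{1^ρ}, σ^{2^ρ}, …, σ^{d^ρ}) ∈ S_0 × ⋯ × S_0 and let g_{τ^ρ} = τ^ρ ∏_{n≥1} D_{d^n}(τ^ρ) ∈ St(1). Then for every h ∈ St_H(1), the element h·g_{τ^ρ} fixes exactly d vertices at every level n ≥ 1 of T; more precisely, there is a unique end γ of T fixed by h·g_{τ^ρ}, the label of h·g_{τ^ρ} at every vertex of γ is trivial, and h·g_{τ^ρ} moves every vertex that is not an immediate descendant of a vertex of γ. -/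

import Mathlib

/-!
Common framework: automorphisms of the `d`-adic rooted tree.

Vertices of the `d`-adic rooted tree `T` are finite words over the alphabet `Fin d`
(the root is the empty word `[]`, and the immediate descendants of `v` are the words
`v ++ [i]`).  An automorphism of `T` is a permutation of the vertex set preserving
the length (= level) of words and the prefix (= ancestor) relation.
-/

namespace ArboGal

/-- An automorphism of the `d`-adic rooted tree. -/
structure TreeAut (d : ℕ) where
  toPerm : Equiv.Perm (List (Fin d))
  length_eq : ∀ v, (toPerm v).length = v.length
  prefix_mono : ∀ v w, v <+: w → toPerm v <+: toPerm w

namespace TreeAut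

variable {d : ℕ}

lemma toPerm_injective : Function.Injective (toPerm : TreeAut d → Equiv.Perm (List (Fin d))) := by
  rintro ⟨a, _, _⟩ ⟨b, _, _⟩ h
  simpa using h

lemma symm_length (g : TreeAut d) (v : List (Fin d)) :
    (g.toPerm.symm v).length = v.length := by
  conv_rhs => rw [← Equiv.apply_symm_apply g.toPerm v, g.length_eq]

lemma symm_prefix (g : TreeAut d) {v w : List (Fin d)} (h : v <+: w) :
    g.toPerm.symm v <+: g.toPerm.symm w := by
  set p := (g.toPerm.symm w).take v.length with hp
  have hpw : p <+: g.toPerm.symm w := List.take_prefix _ _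
  have h1 : g.toPerm p <+: w := by
    have h2 := g.prefix_mono _ _ hpw
    rwa [Equiv.apply_symm_apply] at h2
  have hvlen : v.length ≤ w.length := h.length_le
  have hplen : (g.toPerm p).length = v.length := by
    rw [g.length_eq, hp, List.length_take, symm_length]
    omega
  have hgpv : g.toPerm p = v := by
    have e1 := List.prefix_iff_eq_take.mp h1
    have e2 := List.prefix_iff_eq_take.mp h
    rw [hplen] at e1
    rw [e1, ← e2]
  have hfin : p = g.toPerm.symm v := by
    rw [← hgpv, Equiv.symm_apply_apply]
  rw [← hfin]
  exact hpw

instance : Group (TreeAut d) where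
  one := ⟨Equiv.refl _, fun _ => rfl, fun _ _ h => h⟩
  mul g h := ⟨g.toPerm.trans h.toPerm,
    fun v => by simp [Equiv.trans_apply, h.length_eq, g.length_eq],
    fun v w hvw => h.prefix_mono _ _ (g.prefix_mono _ _ hvw)⟩
  inv g := ⟨g.toPerm.symm, g.symm_length, fun _ _ h => g.symm_prefix h⟩
  mul_assoc a b c := toPerm_injective rfl
  one_mul a := toPerm_injective (Equiv.ext fun _ => rfl)
  mul_one a := toPerm_injective (Equiv.ext fun _ => rfl)
  inv_mul_cancel a := toPerm_injective (Equiv.symm_trans_self a.toPerm)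

@[simp] lemma mul_toPerm (g h : TreeAut d) : (g * h).toPerm = g.toPerm.trans h.toPerm := rfl
@[simp] lemma one_toPerm : (1 : TreeAut d).toPerm = Equiv.refl _ := rfl
@[simp] lemma inv_toPerm (g : TreeAut d) : (g⁻¹).toPerm = g.toPerm.symm := rfl

lemma apply_append (g : TreeAut d) (v w : List (Fin d)) :
    g.toPerm (v ++ w) = g.toPerm v ++ (g.toPerm (v ++ w)).drop v.length := by
  obtain ⟨s, hs⟩ := g.prefix_mono v (v ++ w) (List.prefix_append v w)
  rw [← hs]
  congr 1
  rw [← g.length_eq v]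
  exact List.drop_left.symm

/-- The section `g|_v` of `g` at the vertex `v` : the unique automorphism of `T` with
`(v ++ w)^g = v^g ++ w^(g|_v)` for all words `w`. -/
def sect (g : TreeAut d) (v : List (Fin d)) : TreeAut d where
  toPerm :=
    { toFun := fun w => (g.toPerm (v ++ w)).drop v.length
      invFun := fun w => (g.toPerm.symm (g.toPerm v ++ w)).drop v.length
      left_inv := by
        intro w
        show (g.toPerm.symm (g.toPerm v ++ (g.toPerm (v ++ w)).drop v.length)).drop v.length = w
        rw [← apply_append g v w, Equiv.symm_apply_apply, List.drop_left]
      right_inv := by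
        intro w
        set u := g.toPerm.symm (g.toPerm v ++ w) with hu
        have hvu : v <+: u := by
          have h2 : g.toPerm.symm (g.toPerm v) <+: u := g.symm_prefix (List.prefix_append _ _)
          rwa [Equiv.symm_apply_apply] at h2
        have hrecon : v ++ u.drop v.length = u := by
          obtain ⟨s, hs⟩ := hvu
          rw [← hs, List.drop_left]
        show (g.toPerm (v ++ u.drop v.length)).drop v.length = w
        rw [hrecon, hu, Equiv.apply_symm_apply, ← g.length_eq v, List.drop_left] }
  length_eq := fun w => by
    show ((g.toPerm (v ++ w)).drop v.length).length = w.length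
    rw [List.length_drop, g.length_eq, List.length_append]
    omega
  prefix_mono := by
    intro w₁ w₂ h
    have h2 : g.toPerm (v ++ w₁) <+: g.toPerm (v ++ w₂) := by
      apply g.prefix_mono
      obtain ⟨s, rfl⟩ := h
      rw [← List.append_assoc]
      exact List.prefix_append _ _
    show (g.toPerm (v ++ w₁)).drop v.length <+: (g.toPerm (v ++ w₂)).drop v.length
    rw [apply_append g v w₁, apply_append g v w₂] at h2
    exact (List.prefix_append_right_inj _).mp h2

@[simp] lemma sect_apply (g : TreeAut d) (v w : List (Fin d)) :
    (sect g v).toPerm w = (g.toPerm (v ++ w)).drop v.length := rfl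

lemma concat_of_prefix_succ {α : Type*} {l₁ l₂ : List α} (h : l₁ <+: l₂)
    (hl : l₂.length = l₁.length + 1) (x : α) : l₂ = l₁ ++ [l₂.getLastD x] := by
  obtain ⟨s, rfl⟩ := h
  have hs : s.length = 1 := by
    rw [List.length_append] at hl
    omega
  obtain ⟨a, rfl⟩ := List.length_eq_one_iff.mp hs
  rw [List.getLastD_concat]

lemma apply_child (g : TreeAut d) (v : List (Fin d)) (i : Fin d) :
    g.toPerm (v ++ [i]) = g.toPerm v ++ [(g.toPerm (v ++ [i])).getLastD i] := by
  apply concat_of_prefix_succ (g.prefix_mono v _ (List.prefix_append _ _))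
  rw [g.length_eq, g.length_eq, List.length_append, List.length_singleton]

/-- The label `g|_v^1` of `g` at the vertex `v`, i.e. the permutation induced by `g` on the
immediate descendants of `v` (identified with `Fin d`): `(v ++ [i])^g = v^g ++ [(label g v) i]`. -/
def label (g : TreeAut d) (v : List (Fin d)) : Equiv.Perm (Fin d) where
  toFun i := (g.toPerm (v ++ [i])).getLastD i
  invFun j := (g.toPerm.symm (g.toPerm v ++ [j])).getLastD j
  left_inv := by
    intro i
    show (g.toPerm.symm (g.toPerm v ++ [(g.toPerm (v ++ [i])).getLastD i])).getLastD _ = i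
    rw [← apply_child, Equiv.symm_apply_apply, List.getLastD_concat]
  right_inv := by
    intro j
    set u := g.toPerm.symm (g.toPerm v ++ [j]) with hu
    have hvu : v <+: u := by
      have h2 : g.toPerm.symm (g.toPerm v) <+: u := g.symm_prefix (List.prefix_append _ _)
      rwa [Equiv.symm_apply_apply] at h2
    have hlen : u.length = v.length + 1 := by
      rw [hu, symm_length, List.length_append, g.length_eq, List.length_singleton]
    have h3 : u = v ++ [u.getLastD j] := concat_of_prefix_succ hvu hlen j
    show (g.toPerm (v ++ [u.getLastD j])).getLastD (u.getLastD j) = j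
    rw [← h3, hu, Equiv.apply_symm_apply, List.getLastD_concat]

lemma label_apply (g : TreeAut d) (v : List (Fin d)) (i : Fin d) :
    label g v i = (g.toPerm (v ++ [i])).getLastD i := rfl

lemma apply_concat (g : TreeAut d) (v : List (Fin d)) (i : Fin d) :
    g.toPerm (v ++ [i]) = g.toPerm v ++ [label g v i] := apply_child g v i

end TreeAut

open TreeAut

/-! ### Portraits

Every assignment of a permutation of `Fin d` (a "label") to each vertex determines a unique
automorphism of the `d`-adic tree; this is used to construct explicit automorphisms. -/

/-- Auxiliary function for `ofPortrait`. -/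
def pf (c : List (Fin d) → Equiv.Perm (Fin d)) : List (Fin d) → List (Fin d) → List (Fin d)
  | _, [] => []
  | v, i :: w => c v i :: pf c (v ++ [i]) w

/-- Auxiliary inverse function for `ofPortrait`. -/
def pfInv (c : List (Fin d) → Equiv.Perm (Fin d)) : List (Fin d) → List (Fin d) → List (Fin d)
  | _, [] => []
  | v, j :: w => (c v)⁻¹ j :: pfInv c (v ++ [(c v)⁻¹ j]) w

lemma pf_leftInv (c : List (Fin d) → Equiv.Perm (Fin d)) :
    ∀ (w v : List (Fin d)), pfInv c v (pf c v w) = w := by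
  intro w
  induction w with
  | nil => intro v; rfl
  | cons i w ih =>
      intro v
      show (c v)⁻¹ (c v i) :: pfInv c (v ++ [(c v)⁻¹ (c v i)]) (pf c (v ++ [i]) w) = i :: w
      rw [Equiv.Perm.inv_def, Equiv.symm_apply_apply, ih]

lemma pf_rightInv (c : List (Fin d) → Equiv.Perm (Fin d)) :
    ∀ (w v : List (Fin d)), pf c v (pfInv c v w) = w := by
  intro w
  induction w with
  | nil => intro v; rfl
  | cons j w ih =>
      intro v
      show c v ((c v)⁻¹ j) :: pf c (v ++ [(c v)⁻¹ j]) (pfInv c (v ++ [(c v)⁻¹ j]) w) = j :: w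
      rw [Equiv.Perm.inv_def, Equiv.apply_symm_apply, ih]

lemma pf_length (c : List (Fin d) → Equiv.Perm (Fin d)) :
    ∀ (w v : List (Fin d)), (pf c v w).length = w.length := by
  intro w
  induction w with
  | nil => intro v; rfl
  | cons i w ih =>
      intro v
      show (c v i :: pf c (v ++ [i]) w).length = w.length + 1
      rw [List.length_cons, ih]

lemma pf_append (c : List (Fin d) → Equiv.Perm (Fin d)) :
    ∀ (a b v : List (Fin d)), pf c v (a ++ b) = pf c v a ++ pf c (v ++ a) b := by
  intro a
  induction a with
  | nil => intro b v; simp [pf]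
  | cons i a ih =>
      intro b v
      show c v i :: pf c (v ++ [i]) (a ++ b) = (c v i :: pf c (v ++ [i]) a) ++ pf c (v ++ i :: a) b
      rw [ih, List.cons_append, ← List.append_cons]

/-- The automorphism of the `d`-adic tree whose label at each vertex `v` is `c v`. -/
def ofPortrait (c : List (Fin d) → Equiv.Perm (Fin d)) : TreeAut d where
  toPerm := ⟨pf c [], pfInv c [], fun w => pf_leftInv c w [], fun w => pf_rightInv c w []⟩
  length_eq := fun v => pf_length c v []
  prefix_mono := by
    intro v w h
    obtain ⟨s, rfl⟩ := h
    change pf c [] v <+: pf c [] (v ++ s)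
    rw [pf_append]
    exact ⟨pf c ([] ++ v) s, rfl⟩

lemma ofPortrait_label (c : List (Fin d) → Equiv.Perm (Fin d)) (v : List (Fin d)) :
    label (ofPortrait c) v = c v := by
  apply Equiv.ext
  intro i
  show ((ofPortrait c).toPerm (v ++ [i])).getLastD i = (c v) i
  have h1 : (ofPortrait c).toPerm (v ++ [i]) = pf c [] (v ++ [i]) := rfl
  rw [h1, pf_append]
  have h2 : pf c ([] ++ v) [i] = [c v i] := by simp [pf]
  rw [h2, List.getLastD_concat]


open TreeAut

section Predicates

variable {d : ℕ}

/-- A set of tree automorphisms is *self-similar* if it is closed under taking sections. -/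
def SelfSimilarS (S : Set (TreeAut d)) : Prop :=
  ∀ g ∈ S, ∀ v : List (Fin d), sect g v ∈ S

/-- A set of tree automorphisms is *level-transitive* if it acts transitively on each
level of the tree. -/
def LevelTrans (S : Set (TreeAut d)) : Prop :=
  ∀ v w : List (Fin d), v.length = w.length → ∃ g ∈ S, g.toPerm v = w

/-- `φ_v(st_S(v))`: the set of sections at `v` of the elements of `S` stabilizing `v`. -/
def vertexSections (S : Set (TreeAut d)) (v : List (Fin d)) : Set (TreeAut d) :=
  {x | ∃ g ∈ S, g.toPerm v = v ∧ sect g v = x}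

/-- A set of tree automorphisms is *fractal* if it is self-similar, level-transitive and
`φ_v(st_S(v)) = S` for every vertex `v`. -/
def FractalS (S : Set (TreeAut d)) : Prop :=
  SelfSimilarS S ∧ LevelTrans S ∧ ∀ v : List (Fin d), vertexSections S v = S

/-- The intermediate group `G_H = {g ∈ G ∣ (g|_v)(g|_w)⁻¹ ∈ H for all vertices v, w}`. -/
def GHset (G H : Set (TreeAut d)) : Set (TreeAut d) :=
  {g ∈ G | ∀ v w : List (Fin d), sect g v * (sect g w)⁻¹ ∈ H}

/-- Two automorphisms agree on all vertices of level at most `n`. -/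
def agreeUpTo (n : ℕ) (g h : TreeAut d) : Prop :=
  ∀ v : List (Fin d), v.length ≤ n → g.toPerm v = h.toPerm v

/-- A set of tree automorphisms is *closed* (in the congruence = profinite topology of
`Aut T`) if it contains every automorphism that can be approximated up to every level by
elements of the set. -/
def CongrClosedS (S : Set (TreeAut d)) : Prop :=
  ∀ g : TreeAut d, (∀ n : ℕ, ∃ h ∈ S, agreeUpTo n g h) → g ∈ S

/-- The closure of a subgroup of `Aut T` in the congruence (profinite) topology. -/
def congrClosure (Γ : Subgroup (TreeAut d)) : Subgroup (TreeAut d) where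
  carrier := {g | ∀ n : ℕ, ∃ h ∈ Γ, agreeUpTo n g h}
  one_mem' := fun n => ⟨1, Γ.one_mem, fun _ _ => rfl⟩
  mul_mem' := by
    intro a b ha hb n
    obtain ⟨x, hx, hax⟩ := ha n
    obtain ⟨y, hy, hby⟩ := hb n
    refine ⟨x * y, Γ.mul_mem hx hy, fun v hv => ?_⟩
    show b.toPerm (a.toPerm v) = y.toPerm (x.toPerm v)
    rw [hax v hv]
    exact hby _ (by rw [x.length_eq]; exact hv)
  inv_mem' := by
    intro a ha n
    obtain ⟨x, hx, hax⟩ := ha n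
    refine ⟨x⁻¹, Γ.inv_mem hx, fun v hv => ?_⟩
    show a.toPerm.symm v = x.toPerm.symm v
    apply a.toPerm.injective
    rw [Equiv.apply_symm_apply]
    rw [hax (x.toPerm.symm v) (by rw [x.symm_length]; exact hv)]
    exact (Equiv.apply_symm_apply _ _).symm

/-- The action `π_n(g)` of `g` on the `n`-th level of the tree. -/
def lmap (n : ℕ) (g : TreeAut d) :
    {v : List (Fin d) // v.length = n} → {v : List (Fin d) // v.length = n} :=
  fun v => ⟨g.toPerm v.1, by rw [g.length_eq]; exact v.2⟩

/-- The image `π_n(S)` of a set of tree automorphisms on the `n`-th level of the tree.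
(An automorphism of the truncated tree `T^n` is uniquely determined by its action on the
`n`-th level, so this faithfully encodes the action on `T^n`.) -/
def levelImage (n : ℕ) (S : Set (TreeAut d)) :
    Set ({v : List (Fin d) // v.length = n} → {v : List (Fin d) // v.length = n}) :=
  lmap n '' S

/-- The proportion of elements of `π_n(S)` fixing some vertex at level `n`. -/
noncomputable def fixRatio (S : Set (TreeAut d)) (n : ℕ) : ℝ :=
  (Set.ncard {q ∈ levelImage n S | ∃ v, q v = v} : ℝ) / (Set.ncard (levelImage n S) : ℝ)

/-- The fixed-point proportion
`FPP(S) = lim_n #{g ∈ π_n(S) : g fixes a vertex at level n} / |π_n(S)|`. -/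
noncomputable def FPP (S : Set (TreeAut d)) : ℝ :=
  Filter.limUnder Filter.atTop (fixRatio S)

/-- The fixed-point process: `Xfix n g` is the number of vertices at level `n` fixed by `g`. -/
noncomputable def Xfix (n : ℕ) (g : TreeAut d) : ℕ :=
  Set.ncard {v : List (Fin d) | v.length = n ∧ g.toPerm v = v}

/-- The Hausdorff dimension of a (closed) subgroup of `Aut T`,
`hdim(S) = liminf_n log|π_n(S)| / log|π_n(Aut T)|`. -/
noncomputable def hdim (S : Set (TreeAut d)) : ℝ :=
  Filter.liminf
    (fun n => Real.log (Set.ncard (levelImage n S)) /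
      Real.log (Set.ncard (levelImage n (Set.univ : Set (TreeAut d)))))
    Filter.atTop

/-- The Haar measure (in the ambient closed group `G`) of the closure of a subset `S ⊆ G`:
for a closed subgroup `G ≤ Aut T` with Haar probability measure `μ_G` and a subset `S`
whose defining condition is closed, `μ_G(S) = lim_n |π_n(S)|/|π_n(G)| = inf_n |π_n(S)|/|π_n(G)|`
(the sequence is non-increasing). -/
noncomputable def relDensity (G S : Set (TreeAut d)) : ℝ :=
  ⨅ n : ℕ, (Set.ncard (levelImage n S) : ℝ) / (Set.ncard (levelImage n G) : ℝ)

/-- The rigid vertex stabilizer `rist_S(v)`: elements of `S` fixing every vertex that is not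
a descendant of `v`. -/
def ristS (S : Set (TreeAut d)) (v : List (Fin d)) : Set (TreeAut d) :=
  {g ∈ S | ∀ w : List (Fin d), ¬ v <+: w → g.toPerm w = w}

/-- The rigid level stabilizer `Rist_S(n)`: the product of the rigid vertex stabilizers of the
vertices at level `n`.  (An automorphism belongs to this product iff it fixes all vertices up
to level `n` and, below each vertex `v` of level `n`, it agrees with some element of
`rist_S(v)`.) -/
def RistProd (S : Set (TreeAut d)) (n : ℕ) : Set (TreeAut d) :=
  {g ∈ S | (∀ w : List (Fin d), w.length ≤ n → g.toPerm w = w) ∧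
    ∀ v : List (Fin d), v.length = n → ∃ h ∈ ristS S v, sect h v = sect g v}

/-- `R` has finite index in `S`: finitely many right cosets of `R` cover `S`. -/
def FiniteIndexIn (R S : Set (TreeAut d)) : Prop :=
  ∃ T : Finset (TreeAut d), ∀ g ∈ S, ∃ t ∈ T, ∃ r ∈ R, g = r * t

/-- A set of tree automorphisms is *branch* if it is level-transitive and all its rigid level
stabilizers have finite index in it. -/
def BranchS (S : Set (TreeAut d)) : Prop :=
  LevelTrans S ∧ ∀ n : ℕ, 1 ≤ n → FiniteIndexIn (RistProd S n) S

/-- A closed level-transitive group `S` is of *finite type of depth `D`* if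
`S = {g ∈ Aut T ∣ g|_v^D ∈ π_D(S) for all vertices v}`, where `g|_v^D = π_D(g|_v)` is the
depth-`D` section of `g` at `v`. -/
def FiniteType (S : Set (TreeAut d)) (D : ℕ) : Prop :=
  S = {g : TreeAut d | ∀ v : List (Fin d), lmap D (sect g v) ∈ levelImage D S}

/-- The set of right cosets `{H·g : g ∈ S}` (so its cardinality is the index `|S : H|`
when `H ≤ S` are groups). -/
def rightCosets (H S : Set (TreeAut d)) : Set (Set (TreeAut d)) :=
  {C | ∃ g ∈ S, C = {x | ∃ h ∈ H, x = h * g}}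

/-- The set of cosets `{π_D(H)·π_D(g) : g ∈ S}` of `π_D(H)` in `π_D(S)`. -/
def lvlCosets (D : ℕ) (H S : Set (TreeAut d)) :
    Set (Set ({v : List (Fin d) // v.length = D} → {v : List (Fin d) // v.length = D})) :=
  {C | ∃ g ∈ S, C = {q | ∃ h ∈ H, q = lmap D (h * g)}}

/-- The label of `g` at the root: the action `π_1(g)` of `g` on the first level. -/
def rootLabel (g : TreeAut d) : Equiv.Perm (Fin d) := label g []

/-- The action `π_1(S)` of a set of tree automorphisms on the first level. -/
def rootImage (S : Set (TreeAut d)) : Set (Equiv.Perm (Fin d)) := rootLabel '' S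

/-- The set of cosets of `π_1(H)` in `π_1(S)`, i.e. the quotient `Q = π_1(S)/π_1(H)`. -/
def rootCosets (H S : Set (TreeAut d)) : Set (Set (Equiv.Perm (Fin d))) :=
  {C | ∃ a ∈ rootImage S, C = {x | ∃ b ∈ rootImage H, x = b * a}}

/-- The level-`n` vertex of the end (infinite rooted path) `γ`. -/
def pathPrefix (γ : ℕ → Fin d) (n : ℕ) : List (Fin d) :=
  List.ofFn (fun k : Fin n => γ k)

end Predicates


section GSconstruction

variable {d : ℕ}

/-- The subgroups `S_n` of `Aut T` of the construction `G_S` (as sets):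
* `S_0` consists of the rooted automorphisms with label at the root in `S0` (and all other
  labels trivial);
* `S_1 = D_d(S_0)` is the diagonal copy of `S_0` on the level-1 vertices: the labels at all
  the level-1 vertices agree and lie in `S0`, and all other labels are trivial;
* for `n ≥ 2`, `S_n = S_{n−1} × ⋯ × S_{n−1}` (`d` copies, one below each first-level
  vertex): the label at the root is trivial and the section at each first-level vertex lies
  in `S_{n−1}`.
Elements of `S_n` are supported on labels at level `n`. -/
def SnSet (S0 : Subgroup (Equiv.Perm (Fin d))) : ℕ → Set (TreeAut d)
  | 0 => {g | label g [] ∈ S0 ∧ ∀ v : List (Fin d), v ≠ [] → label g v = 1}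
  | 1 => {g | (∃ s ∈ S0, ∀ i : Fin d, label g [i] = s) ∧
      ∀ v : List (Fin d), v.length ≠ 1 → label g v = 1}
  | (n + 2) => {g | label g [] = 1 ∧ ∀ i : Fin d, sect g [i] ∈ SnSet S0 (n + 1)}

/-- The closed subgroup `G_S`: the closure (in the congruence topology) of the subgroup
generated by the `S_n`, `n ≥ 0`.  One has `G_S = ∏_{n≥0} S_n`. -/
def GSgroup (S0 : Subgroup (Equiv.Perm (Fin d))) : Subgroup (TreeAut d) :=
  congrClosure (Subgroup.closure (⋃ n : ℕ, SnSet S0 n))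

/-- For a `d`-tuple `τ` of permutations, `gtau τ ∈ St(1)` is the element of `Aut T` whose
label at the root is trivial and whose label at each vertex `v ≠ ∅` is the component of `τ`
indexed by the last letter of `v`.  Thus its labels at each level `n ≥ 1` consist of the
tuple `τ` repeated diagonally `d^{n−1}` times: `g_τ = τ ∏_{n≥1} D_{d^n}(τ)`. -/
def gtau (τ : Fin d → Equiv.Perm (Fin d)) : TreeAut d :=
  ofPortrait (fun v => match v.getLast? with
    | none => 1
    | some i => τ i)

/-- The set of the elements `g_τ` for `τ ∈ S0 × ⋯ × S0` (`d` copies). -/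
def gtauSet (S0 : Subgroup (Equiv.Perm (Fin d))) : Set (TreeAut d) :=
  {x | ∃ τ : Fin d → Equiv.Perm (Fin d), (∀ i, τ i ∈ S0) ∧ x = gtau τ}

/-- The group `G := ⟨H, g_τ : τ ∈ S0 × ⋯ × S0⟩` where `H := G_S`. -/
def Ggroup (S0 : Subgroup (Equiv.Perm (Fin d))) : Subgroup (TreeAut d) :=
  Subgroup.closure ((GSgroup S0 : Set (TreeAut d)) ∪ gtauSet S0)

end GSconstruction

section Aux

variable {d : ℕ}

lemma label_one (v : List (Fin d)) : label (1 : TreeAut d) v = 1 := by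
  refine Equiv.ext fun i => ?_
  show ((1 : TreeAut d).toPerm (v ++ [i])).getLastD i = i
  show ((v ++ [i])).getLastD i = i
  rw [List.getLastD_concat]

lemma label_mul (a b : TreeAut d) (v : List (Fin d)) :
    label (a * b) v = label b (a.toPerm v) * label a v := by
  refine Equiv.ext fun i => ?_
  rw [label_apply, Equiv.Perm.mul_apply, label_apply, label_apply]
  show (b.toPerm (a.toPerm (v ++ [i]))).getLastD i = _
  rw [apply_concat a v i, apply_concat b (a.toPerm v) _, List.getLastD_concat,
    List.getLastD_concat]
  rfl

lemma label_sect (g : TreeAut d) (u w : List (Fin d)) :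
    label (sect g u) w = label g (u ++ w) := by
  refine Equiv.ext fun i => ?_
  rw [label_apply, label_apply]
  show ((sect g u).toPerm (w ++ [i])).getLastD i = _
  rw [sect_apply, ← List.append_assoc, apply_concat g (u ++ w) i,
    List.drop_append_of_le_length (by rw [g.length_eq, List.length_append]; omega),
    List.getLastD_concat, List.getLastD_concat]

lemma label_inv (a : TreeAut d) (w : List (Fin d)) :
    label a⁻¹ w = (label a (a⁻¹.toPerm w))⁻¹ := by
  have h1 : label (a * a⁻¹) (a⁻¹.toPerm w) = 1 := by
    rw [mul_inv_cancel, label_one]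
  rw [label_mul] at h1
  have h2 : a.toPerm (a⁻¹.toPerm w) = w := a.toPerm.apply_symm_apply w
  rw [h2] at h1
  exact eq_inv_of_mul_eq_one_left h1

lemma fix_concat_iff (g : TreeAut d) {v : List (Fin d)} (hv : g.toPerm v = v) (j : Fin d) :
    g.toPerm (v ++ [j]) = v ++ [j] ↔ label g v j = j := by
  rw [apply_concat, hv]
  constructor
  · intro hh
    have := List.append_cancel_left hh
    simpa using this
  · intro hh; rw [hh]

lemma fix_parent {g : TreeAut d} {v : List (Fin d)} {j : Fin d}
    (hfix : g.toPerm (v ++ [j]) = v ++ [j]) : g.toPerm v = v := by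
  have hp : g.toPerm v <+: v ++ [j] := by
    rw [← hfix]; exact g.prefix_mono _ _ (List.prefix_append _ _)
  have := List.prefix_iff_eq_take.mp hp
  rwa [g.length_eq, List.take_left] at this

/-- The subgroup of tree automorphisms all of whose labels are powers of `σ` and whose
labels at sibling vertices coincide. -/
def Kgroup (σ : Equiv.Perm (Fin d)) : Subgroup (TreeAut d) where
  carrier := {h | (∀ v, label h v ∈ Subgroup.zpowers σ) ∧
      ∀ (v : List (Fin d)) (j j' : Fin d), label h (v ++ [j]) = label h (v ++ [j'])}
  one_mem' := ⟨fun v => by rw [label_one]; exact Subgroup.one_mem _,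
    fun v j j' => by rw [label_one, label_one]⟩
  mul_mem' := by
    rintro a b ⟨ha1, ha2⟩ ⟨hb1, hb2⟩
    refine ⟨fun v => ?_, fun v j j' => ?_⟩
    · rw [label_mul]; exact Subgroup.mul_mem _ (hb1 _) (ha1 _)
    · rw [label_mul, label_mul, apply_concat, apply_concat, ha2 v j j', hb2]
  inv_mem' := by
    rintro a ⟨ha1, ha2⟩
    refine ⟨fun v => ?_, fun v j j' => ?_⟩
    · rw [label_inv]; exact Subgroup.inv_mem _ (ha1 _)
    · rw [label_inv, label_inv, apply_concat a⁻¹ v j, apply_concat a⁻¹ v j', ha2]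

lemma SnSet_props (σ : Equiv.Perm (Fin d)) :
    ∀ n : ℕ, ∀ g ∈ SnSet (Subgroup.zpowers σ) n,
      (∀ v, label g v ∈ Subgroup.zpowers σ) ∧
      (∀ v : List (Fin d), v.length ≠ n → label g v = 1) ∧
      (∀ (v : List (Fin d)) (j j' : Fin d), label g (v ++ [j]) = label g (v ++ [j'])) := by
  intro n
  induction n using Nat.strong_induction_on with
  | _ n IH =>
    match n with
    | 0 =>
      rintro g ⟨hg1, hg2⟩
      have htriv : ∀ v : List (Fin d), v.length ≠ 0 → label g v = 1 := fun v hv =>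
        hg2 v (fun hh => hv (by rw [hh]; rfl))
      refine ⟨fun v => ?_, htriv, fun v j j' => ?_⟩
      · by_cases hv : v = []
        · rw [hv]; exact hg1
        · rw [hg2 v hv]; exact Subgroup.one_mem _
      · rw [htriv _ (by simp), htriv _ (by simp)]
    | 1 =>
      rintro g ⟨⟨s, hs, hgs⟩, hg2⟩
      refine ⟨fun v => ?_, hg2, fun v j j' => ?_⟩
      · by_cases hv : v.length = 1
        · obtain ⟨a, rfl⟩ := List.length_eq_one_iff.mp hv
          rw [hgs a]; exact hs
        · rw [hg2 v hv]; exact Subgroup.one_mem _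
      · match v with
        | [] => rw [show ([] : List (Fin d)) ++ [j] = [j] from rfl,
            show ([] : List (Fin d)) ++ [j'] = [j'] from rfl, hgs j, hgs j']
        | (i :: w) =>
          rw [hg2 _ (by simp), hg2 _ (by simp)]
    | (m + 2) =>
      rintro g ⟨hg1, hg2⟩
      have IH' := fun i => IH (m + 1) (by omega) (sect g [i]) (hg2 i)
      have hcons : ∀ (i : Fin d) (w : List (Fin d)), label g (i :: w) = label (sect g [i]) w :=
        fun i w => (label_sect g [i] w).symm
      refine ⟨fun v => ?_, fun v hv => ?_, fun v j j' => ?_⟩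
      · match v with
        | [] => rw [hg1]; exact Subgroup.one_mem _
        | (i :: w) => rw [hcons]; exact (IH' i).1 w
      · match v with
        | [] => exact hg1
        | (i :: w) =>
          rw [hcons]
          exact (IH' i).2.1 w (by simp at hv ⊢; omega)
      · match v with
        | [] =>
          rw [show ([] : List (Fin d)) ++ [j] = j :: ([] : List (Fin d)) from rfl,
            show ([] : List (Fin d)) ++ [j'] = j' :: ([] : List (Fin d)) from rfl,
            hcons j, hcons j', (IH' j).2.1 [] (by simp), (IH' j').2.1 [] (by simp)]
        | (i :: w) =>
          rw [show (i :: w) ++ [j] = i :: (w ++ [j]) from rfl,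
            show (i :: w) ++ [j'] = i :: (w ++ [j']) from rfl, hcons, hcons]
          exact (IH' i).2.2 w j j'

lemma label_eq_of_agree {g h' : TreeAut d} {n : ℕ} (hag : agreeUpTo n g h')
    (v : List (Fin d)) (hv : v.length + 1 ≤ n) : label g v = label h' v := by
  refine Equiv.ext fun i => ?_
  rw [label_apply, label_apply, hag (v ++ [i]) (by rw [List.length_append]; simpa)]

lemma GS_mem_K {σ : Equiv.Perm (Fin d)} {h : TreeAut d}
    (hh : h ∈ GSgroup (Subgroup.zpowers σ)) : h ∈ Kgroup σ := by
  have hsub : Subgroup.closure (⋃ n : ℕ, SnSet (Subgroup.zpowers σ) n) ≤ Kgroup σ := by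
    rw [Subgroup.closure_le]
    rintro g hg
    obtain ⟨S, ⟨n, rfl⟩, hgS⟩ := hg
    exact ⟨(SnSet_props σ n g hgS).1, (SnSet_props σ n g hgS).2.2⟩
  constructor
  · intro v
    obtain ⟨h', hh', hag⟩ := hh (v.length + 1)
    rw [label_eq_of_agree hag v le_rfl]
    exact (hsub hh').1 v
  · intro v j j'
    obtain ⟨h', hh', hag⟩ := hh (v.length + 2)
    rw [label_eq_of_agree hag _ (by simp),
      label_eq_of_agree hag (v ++ [j']) (by simp)]
    exact (hsub hh').2 v j j'

lemma label_gtau (τ : Fin d → Equiv.Perm (Fin d)) (v : List (Fin d)) (i : Fin d) :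
    label (gtau τ) (v ++ [i]) = τ i := by
  rw [gtau, ofPortrait_label, List.getLast?_concat]

lemma label_gtau_nil (τ : Fin d → Equiv.Perm (Fin d)) :
    label (gtau τ) [] = 1 := by
  rw [gtau, ofPortrait_label]
  rfl

end Aux

/-- Let `d ≥ 2`, `T` the `d`-adic rooted tree, `σ ∈ Sym(d)` a `d`-cycle
generating `S_0 := ⟨σ⟩`, and let `H := G_S = ∏_{n≥0} S_n` with `S_1 := D_d(S_0)` and
`S_n := S_{n−1} × ⋯ × S_{n−1}` (`d` copies) for `n ≥ 2`.  For `ρ ∈ Sym(d)` put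
`τ^ρ := (σ^{1^ρ}, …, σ^{d^ρ}) ∈ S_0 × ⋯ × S_0` and let
`g_{τ^ρ} = τ^ρ ∏_{n≥1} D_{d^n}(τ^ρ) ∈ St(1)`.  Then for every `h ∈ St_H(1)`, the element
`h·g_{τ^ρ}` fixes exactly `d` vertices at every level `n ≥ 1` of `T`; more precisely,
there is a unique end `γ` of `T` fixed by `h·g_{τ^ρ}`, the label of `h·g_{τ^ρ}` at every
vertex of `γ` is trivial, and `h·g_{τ^ρ}` moves every vertex that is not an immediate
descendant of a vertex of `γ`. -/
theorem GS_times_gtau_fixed_point_process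
    {d : ℕ} (hd : 2 ≤ d) (σ : Equiv.Perm (Fin d))
    (hσcyc : σ.IsCycle) (hσsupp : σ.support = Finset.univ)
    (ρ : Equiv.Perm (Fin d))
    (h : TreeAut d)
    (hhH : h ∈ GSgroup (Subgroup.zpowers σ))
    (hhSt : ∀ v : List (Fin d), v.length ≤ 1 → h.toPerm v = v) :
    -- `τ^ρ := (σ^{1^ρ}, …, σ^{d^ρ})` (written `0`-based):
    ∀ τ : Fin d → Equiv.Perm (Fin d), (∀ i : Fin d, τ i = σ ^ (((ρ i : Fin d) : ℕ) + 1)) →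
    -- `h·g_{τ^ρ}` fixes exactly `d` vertices at every level `n ≥ 1`:
    (∀ n : ℕ, 1 ≤ n → Xfix n (h * gtau τ) = d) ∧
    -- there is an end `γ` fixed by `h·g_{τ^ρ}`, with trivial labels along it, which is
    -- unique, and every vertex that is not an immediate descendant of a vertex of `γ`
    -- is moved:
    ∃ γ : ℕ → Fin d,
      (∀ n : ℕ, (h * gtau τ).toPerm (pathPrefix γ n) = pathPrefix γ n) ∧
      (∀ n : ℕ, label (h * gtau τ) (pathPrefix γ n) = 1) ∧
      (∀ γ' : ℕ → Fin d,
        (∀ n : ℕ, (h * gtau τ).toPerm (pathPrefix γ' n) = pathPrefix γ' n) → γ' = γ) ∧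
      (∀ v : List (Fin d), v ≠ [] →
        (∀ (n : ℕ) (i : Fin d), v ≠ pathPrefix γ n ++ [i]) →
        (h * gtau τ).toPerm v ≠ v) := by
  intro τ hτ
  classical
  set g := h * gtau τ with hg
  obtain ⟨hP1, hP2⟩ := GS_mem_K hhH
  have hord : orderOf σ = d := by
    rw [hσcyc.orderOf, hσsupp, Finset.card_univ, Fintype.card_fin]
  have hd0 : 0 < d := by omega
  have hroot_fix : g.toPerm [] = [] :=
    List.length_eq_zero_iff.mp (g.length_eq [])
  have hh_nil : h.toPerm [] = [] := hhSt [] (by simp)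
  have hlabel_h_nil : label h [] = 1 := by
    refine Equiv.ext fun i => ?_
    rw [label_apply, show ([] : List (Fin d)) ++ [i] = [i] from rfl, hhSt [i] (by simp)]
    rfl
  have hlabel_root : label g [] = 1 := by
    rw [hg, label_mul, hh_nil, label_gtau_nil, hlabel_h_nil, one_mul]
  have hglab : ∀ (v : List (Fin d)) (j : Fin d),
      label g (v ++ [j]) = σ ^ (((ρ (label h v j) : Fin d) : ℕ) + 1) * label h (v ++ [j]) := by
    intro v j
    rw [hg, label_mul, apply_concat h v j, label_gtau, hτ]
  have hzmem : ∀ (v : List (Fin d)) (j : Fin d),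
      label g (v ++ [j]) ∈ Subgroup.zpowers σ := by
    intro v j
    rw [hglab]
    exact Subgroup.mul_mem _ (Subgroup.pow_mem _ (Subgroup.mem_zpowers σ) _) (hP1 _)
  have hnofix : ∀ π : Equiv.Perm (Fin d), π ∈ Subgroup.zpowers σ → π ≠ 1 →
      ∀ x, π x ≠ x := by
    intro π hπ hne x hx
    obtain ⟨m, rfl⟩ := (Submonoid.mem_powers_iff _ _).mp (mem_powers_iff_mem_zpowers.mpr hπ)
    have hσx : σ x ≠ x := Equiv.Perm.mem_support.mp (by rw [hσsupp]; exact Finset.mem_univ x)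
    exact hne ((hσcyc.pow_eq_one_iff' hσx).mpr hx)
  -- key per-vertex fact: exactly one child label is trivial
  have hkey : ∀ v : List (Fin d), ∃! j : Fin d, label g (v ++ [j]) = 1 := by
    intro v
    have htall : ∀ j : Fin d, label h (v ++ [j]) = label h (v ++ [⟨0, hd0⟩]) :=
      fun j => hP2 v j ⟨0, hd0⟩
    set t := label h (v ++ [⟨0, hd0⟩]) with ht
    have htmem : t⁻¹ ∈ Subgroup.zpowers σ := Subgroup.inv_mem _ (hP1 _)
    obtain ⟨m, hm⟩ := (Submonoid.mem_powers_iff _ _).mp (mem_powers_iff_mem_zpowers.mpr htmem)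
    set a := (m + d - 1) % d with ha
    have hadlt : a < d := Nat.mod_lt _ hd0
    have hmod : (a + 1) % d = m % d := by
      have h1 : (a + 1) % d = ((m + d - 1) + 1) % d := Nat.ModEq.add_right 1 (Nat.mod_modEq _ d)
      rw [h1, show (m + d - 1) + 1 = m + d from by omega, Nat.add_mod_right]
    have hiff : ∀ j : Fin d, label g (v ++ [j]) = 1 ↔ ((ρ (label h v j) : Fin d) : ℕ) = a := by
      intro j
      rw [hglab, htall j]
      constructor
      · intro hj
        have he : σ ^ (((ρ (label h v j) : Fin d) : ℕ) + 1) = σ ^ m := by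
          rw [hm]; exact eq_inv_of_mul_eq_one_left hj
        have hmodeq := pow_eq_pow_iff_modEq.mp he
        rw [hord] at hmodeq
        have h3 : (((ρ (label h v j) : Fin d) : ℕ) + 1) % d = (a + 1) % d := by
          have : (((ρ (label h v j) : Fin d) : ℕ) + 1) % d = m % d := hmodeq
          rw [this, hmod]
        have h4 : ((ρ (label h v j) : Fin d) : ℕ) % d = a % d :=
          Nat.ModEq.add_right_cancel' 1 h3
        rwa [Nat.mod_eq_of_lt (ρ (label h v j)).isLt, Nat.mod_eq_of_lt hadlt] at h4
      · intro hj
        have hme : (((ρ (label h v j) : Fin d) : ℕ) + 1) ≡ m [MOD orderOf σ] := by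
          rw [hord]
          show (((ρ (label h v j) : Fin d) : ℕ) + 1) % d = m % d
          rw [hj, hmod]
        have : σ ^ (((ρ (label h v j) : Fin d) : ℕ) + 1) = t⁻¹ := by
          rw [← hm]; exact pow_eq_pow_iff_modEq.mpr hme
        rw [this, inv_mul_cancel]
    refine ⟨(label h v).symm (ρ.symm ⟨a, hadlt⟩), ?_, ?_⟩
    · exact (hiff _).mpr (by simp)
    · intro j hj
      rw [hiff] at hj
      have h5 : ρ (label h v j) = ⟨a, hadlt⟩ := Fin.ext hj
      have h6 := congrArg (fun x => (label h v).symm (ρ.symm x)) h5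
      simpa using h6
  -- the canonical path
  set f : List (Fin d) → Fin d := fun w => (hkey w).exists.choose with hf
  have hfspec : ∀ w, label g (w ++ [f w]) = 1 := fun w => (hkey w).exists.choose_spec
  set V : ℕ → List (Fin d) := fun n => Nat.rec [] (fun _ w => w ++ [f w]) n with hV
  have hVsucc : ∀ n, V (n + 1) = V n ++ [f (V n)] := fun n => rfl
  have hVlen : ∀ n, (V n).length = n := by
    intro n
    induction n with
    | zero => rfl
    | succ n ih => rw [hVsucc, List.length_append, ih]; rfl
  have hsucc' : ∀ (δ : ℕ → Fin d) (n : ℕ),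
      pathPrefix δ (n + 1) = pathPrefix δ n ++ [δ n] := by
    intro δ n
    show List.ofFn _ = _
    rw [List.ofFn_succ']
    simp [pathPrefix, List.concat_eq_append]
  have hpath : ∀ n, pathPrefix (fun n => f (V n)) n = V n := by
    intro n
    induction n with
    | zero =>
      show List.ofFn _ = _
      rw [List.ofFn_zero]
      rfl
    | succ n ih => rw [hsucc', ih, hVsucc]
  have hfixV : ∀ n, g.toPerm (V n) = V n ∧ label g (V n) = 1 := by
    intro n
    induction n with
    | zero => exact ⟨hroot_fix, hlabel_root⟩
    | succ n ih =>
      refine ⟨?_, hfspec (V n)⟩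
      rw [hVsucc]
      exact (fix_concat_iff g ih.1 _).mpr (by rw [ih.2]; simp)
  -- characterization of fixed vertices at each level
  have hchar : ∀ (n : ℕ) (v : List (Fin d)), v.length = n + 1 →
      (g.toPerm v = v ↔ ∃ j, v = V n ++ [j]) := by
    intro n
    induction n with
    | zero =>
      intro v hv
      obtain ⟨x, rfl⟩ := List.length_eq_one_iff.mp hv
      constructor
      · intro _; exact ⟨x, rfl⟩
      · rintro ⟨j, hvj⟩
        have hV0 : V 0 = ([] : List (Fin d)) := rfl
        rw [hvj, hV0]
        exact (fix_concat_iff g hroot_fix j).mpr (by rw [hlabel_root]; simp)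
    | succ n ihn =>
      intro v hv
      constructor
      · intro hfix
        have hvne : v ≠ [] := by intro hh; rw [hh] at hv; simp at hv
        have hsplit : v.dropLast ++ [v.getLast hvne] = v := List.dropLast_append_getLast hvne
        have hwlen : v.dropLast.length = n + 1 := by rw [List.length_dropLast, hv]; omega
        have hfix' : g.toPerm (v.dropLast ++ [v.getLast hvne]) =
            v.dropLast ++ [v.getLast hvne] := by rw [hsplit]; exact hfix
        have hwfix : g.toPerm v.dropLast = v.dropLast := fix_parent hfix'
        obtain ⟨j', hj'⟩ := (ihn _ hwlen).mp hwfix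
        have hlabfix : label g v.dropLast (v.getLast hvne) = v.getLast hvne :=
          (fix_concat_iff g hwfix _).mp hfix'
        rw [hj'] at hlabfix
        have hwlab : label g (V n ++ [j']) = 1 := by
          by_contra hne
          exact hnofix _ (hzmem (V n) j') hne _ hlabfix
        have hjeq : j' = f (V n) := (hkey (V n)).unique hwlab (hfspec (V n))
        refine ⟨v.getLast hvne, ?_⟩
        conv_lhs => rw [← hsplit]
        rw [hj', hjeq, ← hVsucc]
      · rintro ⟨j, rfl⟩
        exact (fix_concat_iff g (hfixV (n + 1)).1 j).mpr (by rw [(hfixV (n + 1)).2]; simp)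
  constructor
  · -- exactly d fixed vertices at each level
    intro n hn
    obtain ⟨m, rfl⟩ : ∃ m, n = m + 1 := ⟨n - 1, by omega⟩
    show Set.ncard {v : List (Fin d) | v.length = m + 1 ∧ g.toPerm v = v} = d
    have hset : {v : List (Fin d) | v.length = m + 1 ∧ g.toPerm v = v} =
        (fun j : Fin d => V m ++ [j]) '' Set.univ := by
      ext v
      simp only [Set.mem_setOf_eq, Set.image_univ, Set.mem_range]
      constructor
      · rintro ⟨hl, hfx⟩
        obtain ⟨j, hj⟩ := (hchar m v hl).mp hfx
        exact ⟨j, hj.symm⟩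
      · rintro ⟨j, rfl⟩
        have hl : (V m ++ [j]).length = m + 1 := by
          rw [List.length_append, hVlen]; rfl
        exact ⟨hl, (hchar m _ hl).mpr ⟨j, rfl⟩⟩
    have hinj : Function.Injective (fun j : Fin d => V m ++ [j]) := by
      intro x y hxy
      simpa using List.append_cancel_left hxy
    rw [hset, Set.ncard_image_of_injective _ hinj, Set.ncard_univ,
      Nat.card_eq_fintype_card, Fintype.card_fin]
  · refine ⟨fun n => f (V n), ?_, ?_, ?_, ?_⟩
    · intro n; rw [hpath n]; exact (hfixV n).1
    · intro n; rw [hpath n]; exact (hfixV n).2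
    · intro γ' hγ'
      have hpre : ∀ n, pathPrefix γ' n = V n := by
        intro n
        have hlen : (pathPrefix γ' (n + 1)).length = n + 1 := by
          simp [pathPrefix]
        obtain ⟨j, hj⟩ := (hchar n _ hlen).mp (hγ' (n + 1))
        rw [hsucc'] at hj
        exact (List.append_inj' hj rfl).1
      funext n
      show γ' n = f (V n)
      have h1 : pathPrefix γ' n ++ [γ' n] = V (n + 1) := by
        rw [← hsucc' γ' n]; exact hpre (n + 1)
      rw [hVsucc, hpre n] at h1
      simpa using List.append_cancel_left h1
    · intro v hvne hnotchild hfix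
      have hlp : 0 < v.length := List.length_pos_iff.mpr hvne
      have hlen : v.length = (v.length - 1) + 1 := by omega
      obtain ⟨j, hj⟩ := (hchar (v.length - 1) v hlen).mp hfix
      refine hnotchild (v.length - 1) j ?_
      rw [hpath]
      exact hj

end ArboGal
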